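/- The 1-cocycle δ_{1,1} of the Witt algebra with coefficients in 𝓕_1 ⊗ 𝓕_1 is not a 1-coboundary. -/

import Mathlib

/-- The action of the Witt basis element `L m` on `𝓕_α ⊗ 𝓕_β`, realized on
`(ℤ × ℤ) →₀ ℂ` with basis `v_i ⊗ w_j ↦ single (i, j) 1`:
`L_m · (v_i ⊗ w_j) = -(i + αm) v_{m+i} ⊗ w_j - (j + βm) v_i ⊗ w_{m+j}`. -/
noncomputable def tact (α β : ℂ) (m : ℤ) : ((ℤ × ℤ) →₀ ℂ) →ₗ[ℂ] ((ℤ × ℤ) →₀ ℂ) :=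
  Finsupp.lsum ℂ fun p => LinearMap.toSpanSingleton ℂ ((ℤ × ℤ) →₀ ℂ)
    ((-((p.1 : ℂ) + α * m)) • Finsupp.single (m + p.1, p.2) (1 : ℂ)
      + (-((p.2 : ℂ) + β * m)) • Finsupp.single (p.1, m + p.2) (1 : ℂ))

/-- A family `d n = d(L_n)` is a 1-cocycle of the Witt algebra with
coefficients in `𝓕_α ⊗ 𝓕_β`: `d([L_m, L_n]) = L_m · d(L_n) - L_n · d(L_m)`. -/
def IsCocycle (α β : ℂ) (d : ℤ → ((ℤ × ℤ) →₀ ℂ)) : Prop :=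
  ∀ m n : ℤ, ((m - n : ℤ) : ℂ) • d (m + n) = tact α β m (d n) - tact α β n (d m)

/-- `d` is a 1-coboundary: `d(L_n) = L_n · u` for a fixed `u` in the module. -/
def IsCoboundary (α β : ℂ) (d : ℤ → ((ℤ × ℤ) →₀ ℂ)) : Prop :=
  ∃ u : (ℤ × ℤ) →₀ ℂ, ∀ n : ℤ, d n = tact α β n u

/-- The map `δ_{1,1} : 𝒲 → 𝓕_1 ⊗ 𝓕_1`. -/
noncomputable def d11 (n : ℤ) : (ℤ × ℤ) →₀ ℂ :=
  if 1 ≤ n then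
    ∑ i ∈ Finset.Icc (1 : ℤ) n, ((i : ℂ) * ((n : ℂ) - i)) • Finsupp.single (i, n - i) (1 : ℂ)
  else if n = 0 then 0
  else - ∑ i ∈ Finset.Icc n (-1 : ℤ),
    ((i : ℂ) * ((n : ℂ) - i)) • Finsupp.single (i, n - i) (1 : ℂ)

/-!
The coefficient of `L_m · u` at `v_i ⊗ w_j` only involves `u` at `(i - m, j)` and `(i, j - m)`.
Choose `a ≥ 1` beyond the first coordinates of the support of `u`: the coefficient of
`v_a ⊗ w_a` in `δ_{1,1}(L_{2a})` is `a² ≠ 0`, while in `L_{2a} · u` it only involves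
`u (-a, a)` and `u (a, -a)`, which vanish.
-/

theorem tact_apply (α β : ℂ) (m : ℤ) (u : (ℤ × ℤ) →₀ ℂ) (i j : ℤ) :
    tact α β m u (i, j) = -(((i - m : ℤ) : ℂ) + α * m) * u (i - m, j)
      - (((j - m : ℤ) : ℂ) + β * m) * u (i, j - m) := by
  induction u using Finsupp.induction_linear with
  | zero => simp
  | add f g hf hg => simp only [map_add, Finsupp.add_apply, hf, hg]; ring
  | single p c =>
    obtain ⟨k, l⟩ := p
    simp only [tact, Finsupp.lsum_single, LinearMap.toSpanSingleton_apply, Finsupp.smul_apply,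
      Finsupp.add_apply, Finsupp.single_apply, Prod.mk.injEq, smul_eq_mul]
    have h₁ : (m + k = i ∧ l = j) ↔ (k = i - m ∧ l = j) := by omega
    have h₂ : (k = i ∧ m + l = j) ↔ (k = i ∧ l = j - m) := by omega
    simp only [h₁, h₂]
    split_ifs with hf hs hs
    · obtain ⟨rfl, rfl⟩ := hf
      obtain rfl : m = 0 := by omega
      push_cast; ring
    · obtain ⟨rfl, rfl⟩ := hf
      push_cast; ring
    · obtain ⟨rfl, rfl⟩ := hs
      push_cast; ring
    · ring

theorem d11_add_apply {i j : ℤ} (hi : 0 < i) (hj : 0 < j) : d11 (i + j) (i, j) = i * j := by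
  have hmem : i ∈ Finset.Icc 1 (i + j) := Finset.mem_Icc.mpr ⟨hi, by omega⟩
  rw [d11, if_pos (by omega), Finset.sum_apply', Finset.sum_eq_single_of_mem i hmem]
  · simp
  · intro k _ hki
    simp [hki]

theorem Finsupp.exists_apply_eq_zero_of_le_natAbs_fst {M : Type*} [Zero M] (u : (ℤ × ℤ) →₀ M) :
    ∃ N : ℕ, ∀ p : ℤ × ℤ, N ≤ p.1.natAbs → u p = 0 := by
  obtain ⟨N, hN⟩ := (u.support.image fun p => p.1.natAbs).exists_nat_subset_range
  refine ⟨N, fun p hp => Finsupp.notMem_support_iff.mp fun hmem => ?_⟩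
  have := Finset.mem_range.mp (hN (Finset.mem_image_of_mem _ hmem))
  omega

/-- the 1-cocycle `δ_{1,1}` is not a 1-coboundary. -/
theorem d11_not_coboundary : ¬ IsCoboundary 1 1 d11 := by
  rintro ⟨u, hu⟩
  obtain ⟨N, hN⟩ := u.exists_apply_eq_zero_of_le_natAbs_fst
  set a : ℤ := N + 1
  have hcoeff := d11_add_apply (i := a) (j := a) (by omega) (by omega)
  rw [hu, tact_apply, hN (a - (a + a), a) (by simp only; omega),
    hN (a, a - (a + a)) (by simp only; omega)] at hcoeff
  simp only [mul_zero, sub_zero, zero_eq_mul, or_self] at hcoeff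
  exact (by omega : a ≠ 0) (by exact_mod_cast hcoeff)
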